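/- Per-step consensus contraction inequality: Let W ∈ ℝ^{N×N} be symmetric, entrywise nonnegative and doubly stochastic, with eigenvalues 1 = λ₁ > λ₂ ≥ … ≥ λ_N > −1, and set λ := max(|λ₂|,|λ_N|) ∈ [0,1). Let J be the N×N all-ones matrix. Suppose x, e ∈ ℝ^N and define x⁺ = Wx + e, x̄ = (1/N)Jx, and x̄⁺ = (1/N)Jx⁺. Then ‖x⁺ − x̄⁺‖₂² ≤ ((1+λ²)/2)·‖x − x̄‖₂² + ((1+λ²)/(1−λ²))·‖e‖₂². -/

import Mathlib

/-!
Subtracting the mean is the orthogonal projection `Q` onto `𝟙ᗮ`. As `W` is symmetric and fixes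
`𝟙`, `Q` commutes with `W`, so `Q x⁺ = W (Q x) + Q e`. The eigenvalue `1 = λ₁` is simple, so its
eigenspace is spanned by `𝟙`, and on `𝟙ᗮ` only the eigenvalues `λ₂, …, λ_N` act: `W` has norm at
most `λ` there. Hence `‖Q x⁺‖ ≤ λ ‖Q x‖ + ‖e‖`, and the bound follows from
`(λa + b)² + ((1-λ²)a - 2λb)² / (2(1-λ²)) = ((1+λ²)/2) a² + ((1+λ²)/(1-λ²)) b²`.
-/

open Finset Matrix Polynomial
open Module Module.End
open scoped InnerProductSpace

theorem Antitone.mem_Icc_of_ne_zero {α : Type*} [Preorder α] {n : ℕ} (hn1 : 1 < n)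
    {d : Fin n → α} (hd : Antitone d) {i : Fin n} (hi : i ≠ ⟨0, Nat.zero_lt_of_lt hn1⟩) :
    d i ∈ Set.Icc (d ⟨n - 1, Nat.sub_one_lt_of_lt hn1⟩) (d ⟨1, hn1⟩) := by
  have hi1 : 1 ≤ (i : ℕ) := Nat.one_le_iff_ne_zero.mpr fun h => hi (Fin.ext h)
  exact ⟨hd (Fin.le_iff_val_le_val.mpr (Nat.le_sub_one_of_lt i.2)),
    hd (Fin.le_iff_val_le_val.mpr hi1)⟩

namespace LinearMap.IsSymmetric

variable {𝕜 E : Type*} [RCLike 𝕜] [NormedAddCommGroup E] [InnerProductSpace 𝕜 E]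
  {T : E →ₗ[𝕜] E}

theorem starProjection_orthogonal_singleton_comm (hT : T.IsSymmetric) {u : E} {c : ℝ}
    (hTu : T u = (c : 𝕜) • u) (x : E) :
    (𝕜 ∙ u)ᗮ.starProjection (T x) = T ((𝕜 ∙ u)ᗮ.starProjection x) := by
  simp only [Submodule.starProjection_orthogonal', _root_.sub_apply, one_apply_eq_self,
    Submodule.starProjection_singleton, map_sub, map_smul, hTu, ← hT u x, inner_smul_left,
    RCLike.conj_ofReal, smul_smul]
  congr 2
  ring

variable [FiniteDimensional 𝕜 E]

theorem eigenvalues_eq_of_charpoly_eq_prod {n : ℕ} (hT : T.IsSymmetric)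
    (hn : finrank 𝕜 E = n) {d : Fin n → ℝ} (hd : Antitone d)
    (h : T.charpoly = ∏ i, (X - C (d i : 𝕜))) : hT.eigenvalues hn = d := by
  rw [← List.ofFn_inj, ← sort_roots_charpoly_eq_eigenvalues, h,
    roots_prod _ _ (by simp [prod_ne_zero_iff, X_sub_C_ne_zero])]
  simp_rw [roots_X_sub_C, Multiset.bind_singleton, Multiset.map_map, Function.comp_def,
    RCLike.ofReal_re, Fin.univ_val_map, Multiset.coe_sort]
  apply List.mergeSort_of_pairwise
  simp_rw [decide_eq_true_eq, ← List.sortedGE_iff_pairwise]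
  exact hd.sortedGE_ofFn

theorem norm_apply_le_of_mem_orthogonal_eigenspace (hT : T.IsSymmetric) {c : ℝ} (hc : 0 ≤ c)
    {y : E} (hy : ∀ μ : 𝕜, c < ‖μ‖ → y ∈ (eigenspace T μ)ᗮ) : ‖T y‖ ≤ c * ‖y‖ := by
  set b := hT.eigenvectorBasis rfl
  set μ := hT.eigenvalues rfl
  have hcoord (i) : ‖⟪b i, T y⟫_𝕜‖ ^ 2 ≤ c ^ 2 * ‖⟪b i, y⟫_𝕜‖ ^ 2 := by
    rw [← b.repr_apply_apply, ← b.repr_apply_apply, hT.eigenvectorBasis_apply_self_apply,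
      norm_mul, mul_pow, RCLike.norm_ofReal]
    by_cases hμ : |μ i| ≤ c
    · gcongr
    · have hb : b i ∈ eigenspace T (μ i) := (hT.hasEigenvector_eigenvectorBasis rfl i).1
      have hbi : ⟪b i, y⟫_𝕜 = 0 := Submodule.inner_right_of_mem_orthogonal hb
        (hy _ (by rwa [RCLike.norm_ofReal, ← not_le]))
      rw [OrthonormalBasis.repr_apply_apply, hbi]
      simp
  refine le_of_sq_le_sq ?_ (by positivity)
  rw [mul_pow, ← b.sum_sq_norm_inner_right, ← b.sum_sq_norm_inner_right, mul_sum]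
  exact sum_le_sum fun i _ => hcoord i

variable {n : ℕ} (hT : T.IsSymmetric) (hn : finrank 𝕜 E = n) (hn1 : 1 < n)

theorem eigenspace_eigenvalues_zero_eq_span
    (hgap : hT.eigenvalues hn ⟨1, hn1⟩ < hT.eigenvalues hn ⟨0, Nat.zero_lt_of_lt hn1⟩)
    {u : E} (hu : u ≠ 0) (hTu : T u = (hT.eigenvalues hn ⟨0, Nat.zero_lt_of_lt hn1⟩ : 𝕜) • u) :
    eigenspace T (hT.eigenvalues hn ⟨0, Nat.zero_lt_of_lt hn1⟩ : 𝕜) = 𝕜 ∙ u := by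
  have hsimple :
      #{i | (hT.eigenvalues hn i : 𝕜) = hT.eigenvalues hn ⟨0, Nat.zero_lt_of_lt hn1⟩} = 1 := by
    refine card_eq_one.mpr ⟨⟨0, Nat.zero_lt_of_lt hn1⟩,
      eq_singleton_iff_unique_mem.mpr ⟨by simp, fun i hi => ?_⟩⟩
    by_contra hi0
    have := ((hT.eigenvalues_antitone hn).mem_Icc_of_ne_zero hn1 hi0).2
    simp only [mem_filter, mem_univ, true_and, RCLike.ofReal_inj] at hi
    linarith
  refine (Submodule.eq_of_le_of_finrank_eq ?_ ?_).symm
  · exact (Submodule.span_singleton_le_iff_mem _ _).mpr (mem_eigenspace_iff.mpr hTu)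
  · rw [finrank_span_singleton hu, ← hT.card_filter_eigenvalues_eq hn, hsimple]

theorem norm_apply_le_of_inner_eq_zero
    (hgap : hT.eigenvalues hn ⟨1, hn1⟩ < hT.eigenvalues hn ⟨0, Nat.zero_lt_of_lt hn1⟩)
    {u : E} (hu : u ≠ 0) (hTu : T u = (hT.eigenvalues hn ⟨0, Nat.zero_lt_of_lt hn1⟩ : 𝕜) • u)
    {y : E} (hy : ⟪u, y⟫_𝕜 = 0) :
    ‖T y‖ ≤ max |hT.eigenvalues hn ⟨1, hn1⟩|
      |hT.eigenvalues hn ⟨n - 1, Nat.sub_one_lt_of_lt hn1⟩| * ‖y‖ := by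
  refine hT.norm_apply_le_of_mem_orthogonal_eigenspace (le_max_of_le_left (abs_nonneg _)) ?_
  intro μ hμ
  by_cases hμT : HasEigenvalue T μ
  · obtain ⟨i, rfl⟩ := hT.exists_eigenvalues_eq hn hμT
    obtain rfl : i = ⟨0, Nat.zero_lt_of_lt hn1⟩ := by
      by_contra hi0
      have hmem := (hT.eigenvalues_antitone hn).mem_Icc_of_ne_zero hn1 hi0
      refine hμ.not_ge ?_
      rw [RCLike.norm_ofReal, max_comm]
      exact abs_le_max_abs_abs hmem.1 hmem.2
    rw [hT.eigenspace_eigenvalues_zero_eq_span hn hn1 hgap hu hTu,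
      Submodule.mem_orthogonal_singleton_iff_inner_right]
    exact hy
  · rw [hasEigenvalue_iff, not_not] at hμT
    simp [hμT]

end LinearMap.IsSymmetric

section EuclideanSpace

variable {ι : Type*} [Fintype ι]

theorem EuclideanSpace.norm_sq_starProjection_orthogonal_span_one (v : ι → ℝ) :
    ‖(ℝ ∙ (WithLp.toLp 2 1 : EuclideanSpace ℝ ι))ᗮ.starProjection (WithLp.toLp 2 v)‖ ^ 2
      = ∑ i, (v i - (Fintype.card ι : ℝ)⁻¹ * ∑ j, v j) ^ 2 := by
  simp [EuclideanSpace.real_norm_sq_eq, Submodule.starProjection_orthogonal',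
    Submodule.starProjection_singleton, PiLp.inner_apply, div_eq_inv_mul]

theorem Matrix.toEuclideanLin_toLp_one [DecidableEq ι] {W : Matrix ι ι ℝ}
    (hWrow : ∀ i, ∑ j, W i j = 1) :
    W.toEuclideanLin (WithLp.toLp 2 1) = WithLp.toLp 2 1 := by
  ext i
  simp [mulVec, dotProduct, hWrow]

end EuclideanSpace

theorem sq_max_abs_lt_one {a b : ℝ} (hb : -1 < b) (hba : b ≤ a) (ha : a < 1) :
    max |a| |b| ^ 2 < 1 := by
  rw [sq_lt_one_iff_abs_lt_one, abs_of_nonneg (by positivity)]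
  exact max_lt (abs_lt.mpr ⟨by linarith, ha⟩) (abs_lt.mpr ⟨hb, by linarith⟩)

theorem add_sq_le_of_sq_lt_one {l : ℝ} (hl : l ^ 2 < 1) (a b : ℝ) :
    (l * a + b) ^ 2 ≤ (1 + l ^ 2) / 2 * a ^ 2 + (1 + l ^ 2) / (1 - l ^ 2) * b ^ 2 := by
  have hpos : 0 < 1 - l ^ 2 := by linarith
  have key : (1 + l ^ 2) / 2 * a ^ 2 + (1 + l ^ 2) / (1 - l ^ 2) * b ^ 2 - (l * a + b) ^ 2
      = ((1 - l ^ 2) * a - 2 * l * b) ^ 2 / (2 * (1 - l ^ 2)) := by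
    field_simp
    ring
  exact sub_nonneg.mp (key ▸ by positivity)

/-- Per-step consensus contraction inequality: for a symmetric, nonnegative, doubly stochastic
mixing matrix `W` with eigenvalues `1 = λ₁ > λ₂ ≥ … ≥ λ_N > −1`, `λ = max(|λ₂|,|λ_N|)`,
`x⁺ = Wx + e`, `x̄ = (1/N)Jx`, `x̄⁺ = (1/N)Jx⁺`, one has
`‖x⁺ − x̄⁺‖₂² ≤ ((1+λ²)/2)‖x − x̄‖₂² + ((1+λ²)/(1−λ²))‖e‖₂²`. -/
theorem per_step_consensus_contraction
    (N : ℕ) (hN : 1 < N)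
    (W : Matrix (Fin N) (Fin N) ℝ)
    (hWsymm : W.IsSymm)
    (hWrow : ∀ i, ∑ j, W i j = 1)
    (eig : Fin N → ℝ)
    (heig : W.charpoly = ∏ i, (Polynomial.X - Polynomial.C (eig i)))
    (hanti : Antitone eig)
    (heig1 : eig ⟨0, by omega⟩ = 1)
    (heig2 : eig ⟨1, hN⟩ < 1)
    (heiglast : -1 < eig ⟨N - 1, by omega⟩)
    (lam : ℝ) (hlam : lam = max |eig ⟨1, hN⟩| |eig ⟨N - 1, by omega⟩|)
    (x e xplus : Fin N → ℝ)
    (hxplus : xplus = W.mulVec x + e) :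
    ∑ i, (xplus i - (N : ℝ)⁻¹ * ∑ j, xplus j) ^ 2
      ≤ ((1 + lam ^ 2) / 2) * ∑ i, (x i - (N : ℝ)⁻¹ * ∑ j, x j) ^ 2
        + ((1 + lam ^ 2) / (1 - lam ^ 2)) * ∑ i, (e i) ^ 2 := by
  have hT : W.toEuclideanLin.IsSymmetric :=
    isSymmetric_toEuclideanLin_iff.mpr (isHermitian_iff_isSymm.mpr hWsymm)
  have hn : finrank ℝ (EuclideanSpace ℝ (Fin N)) = N := finrank_euclideanSpace_fin
  have heigT : hT.eigenvalues hn = eig :=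
    hT.eigenvalues_eq_of_charpoly_eq_prod hn hanti (by simpa [toLpLin_eq_toLin] using heig)
  have hone := toEuclideanLin_toLp_one hWrow
  have hone_ne : (WithLp.toLp 2 1 : EuclideanSpace ℝ (Fin N)) ≠ 0 := fun h => by
    simpa using congrFun (congrArg WithLp.ofLp h) ⟨0, by omega⟩
  set Q := (ℝ ∙ (WithLp.toLp 2 1 : EuclideanSpace ℝ (Fin N)))ᗮ.starProjection
  have hcontr : ‖W.toEuclideanLin (Q (WithLp.toLp 2 x))‖ ≤ lam * ‖Q (WithLp.toLp 2 x)‖ := by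
    have hbound := hT.norm_apply_le_of_inner_eq_zero hn hN (by rw [heigT, heig1]; exact heig2)
      hone_ne (by simpa [heigT, heig1] using hone)
      (Submodule.mem_orthogonal_singleton_iff_inner_right.mp
        (Submodule.starProjection_apply_mem _ (WithLp.toLp 2 x)))
    rwa [heigT, ← hlam] at hbound
  have hstep : Q (WithLp.toLp 2 xplus)
      = W.toEuclideanLin (Q (WithLp.toLp 2 x)) + Q (WithLp.toLp 2 e) := by
    rw [hxplus, WithLp.toLp_add, map_add,
      ← hT.starProjection_orthogonal_singleton_comm (c := 1) (by simpa using hone)]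
    rfl
  have hlam1 : lam ^ 2 < 1 :=
    hlam ▸ sq_max_abs_lt_one heiglast (hanti (Fin.mk_le_mk.mpr (by omega))) heig2
  have hQ (v : Fin N → ℝ) : ∑ i, (v i - (N : ℝ)⁻¹ * ∑ j, v j) ^ 2 = ‖Q (WithLp.toLp 2 v)‖ ^ 2 := by
    rw [EuclideanSpace.norm_sq_starProjection_orthogonal_span_one, Fintype.card_fin]
  rw [hQ, hQ, ← EuclideanSpace.real_norm_sq_eq (WithLp.toLp 2 e), hstep]
  calc _ ≤ (lam * ‖Q (WithLp.toLp 2 x)‖ + ‖WithLp.toLp 2 e‖) ^ 2 := by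
        gcongr
        exact (norm_add_le _ _).trans
          (add_le_add hcontr (Submodule.norm_starProjection_apply_le _ _))
    _ ≤ _ := add_sq_le_of_sq_lt_one hlam1 _ _
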